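/- For every n ≥ 1, the n-th Labos number L_n exists (i.e., there is a smallest positive integer L with π(L) − π(⌊L/2⌋) = n), and L_n ≤ R_n, where R_n is the n-th Ramanujan prime. -/

import Mathlib

/-! Write f(x) = π(x) − π(⌊x/2⌋). Since f(x + 1) ≤ f(x) + 1 and f(1) = 0, at the least R
from which f stays ≥ n we must have f(R) = n, for otherwise R − 1 would already qualify; so R_n
itself lies in the set defining L_n. It remains to see that R_n exists, i.e. that f(x) → ∞.
This is Ramanujan's strengthening of Bertrand's postulate, which follows along Erdős' lines: in
the factorization of C(2k, k) > 4^k / k, primes up to √(2k) contribute at most 2k each, those up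
to 2k/3 at most their primorial ≤ 4^(2k/3), those in (2k/3, k] nothing, and those in (k, 2k] at
most 2k each, so π(2k) − π(k) primes must make up the remaining factor of roughly 4^(k/3). -/

/-- The n-th Ramanujan prime: the smallest positive integer R such that for all
integers x ≥ R one has π(x) − π(⌊x/2⌋) ≥ n. -/
noncomputable def ramanujan (n : ℕ) : ℕ :=
  sInf {R : ℕ | 0 < R ∧ ∀ x : ℕ, R ≤ x →
    n ≤ Nat.primeCounting x - Nat.primeCounting (x / 2)}

/-- The n-th Labos number: the smallest positive integer L with
π(L) − π(⌊L/2⌋) = n. -/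
noncomputable def labos (n : ℕ) : ℕ :=
  sInf {L : ℕ | 0 < L ∧ Nat.primeCounting L - Nat.primeCounting (L / 2) = n}

open Filter Asymptotics

theorem apply_sInf_eq_of_le_add_one {f : ℕ → ℕ} {n : ℕ} (hstep : ∀ x, f (x + 1) ≤ f x + 1)
    (hone : f 1 ≤ n) (hne : {R | 0 < R ∧ ∀ x, R ≤ x → n ≤ f x}.Nonempty) :
    f (sInf {R | 0 < R ∧ ∀ x, R ≤ x → n ≤ f x}) = n := by
  set R := sInf {R | 0 < R ∧ ∀ x, R ≤ x → n ≤ f x}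
  obtain ⟨hRpos, hR⟩ : 0 < R ∧ ∀ x, R ≤ x → n ≤ f x := Nat.sInf_mem hne
  refine (hR R le_rfl).antisymm' (not_lt.mp fun hlt => ?_)
  have hR2 : 2 ≤ R := by
    by_contra!
    have hR1 : R = 1 := by omega
    rw [hR1] at hlt
    omega
  have hpred : R - 1 ∈ {R | 0 < R ∧ ∀ x, R ≤ x → n ≤ f x} := by
    refine ⟨by omega, fun x hx => ?_⟩
    rcases hx.eq_or_lt with rfl | hx
    · have := hstep (R - 1)
      rw [Nat.sub_add_cancel (by omega)] at this
      omega
    · exact hR x (by omega)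
  have := Nat.sInf_le hpred
  omega

section
open Real

theorem isLittleO_sqrt_mul_log : (fun x : ℝ => √x * log x) =o[atTop] id := by
  have h : (fun x : ℝ => √x * log x) =o[atTop] fun x => x ^ (1 / 2 : ℝ) * x ^ (1 / 2 : ℝ) :=
    (isBigO_refl _ _).congr_left (fun x => (sqrt_eq_rpow x).symm) |>.mul_isLittleO
      (isLittleO_log_rpow_atTop (by norm_num))
  refine h.congr' (EventuallyEq.refl _ _) ?_
  filter_upwards [eventually_ge_atTop 0] with x hx
  rw [← rpow_add' hx (by norm_num)]
  norm_num

theorem isLittleO_log_add_sqrt_add_mul_log (m : ℝ) :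
    (fun x : ℝ => log x + (√(2 * x) + m) * log (2 * x)) =o[atTop] id := by
  have h2 : Tendsto (fun x : ℝ => 2 * x) atTop atTop := tendsto_id.const_mul_atTop two_pos
  have hdouble : (fun x : ℝ => 2 * x) =O[atTop] id := isBigO_const_mul_self 2 _ _
  have hlog2 := (isLittleO_log_id_atTop.comp_tendsto h2).trans_isBigO hdouble
  have hsqrt2 := (isLittleO_sqrt_mul_log.comp_tendsto h2).trans_isBigO hdouble
  refine (isLittleO_log_id_atTop.add (hsqrt2.add (hlog2.const_mul_left m))).congr_left ?_
  intro x
  simp only [Function.comp_apply]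
  ring

theorem eventually_mul_rpow_mul_four_rpow_le (m : ℝ) :
    ∀ᶠ x : ℝ in atTop, x * (2 * x) ^ (√(2 * x) + m) * 4 ^ (2 * x / 3) ≤ (4 : ℝ) ^ x := by
  filter_upwards [(isLittleO_log_add_sqrt_add_mul_log m).bound (c := log 4 / 3) (by positivity),
    eventually_gt_atTop 0] with x hx hx0
  rw [← log_le_log_iff (by positivity) (by positivity), log_mul (by positivity) (by positivity),
    log_mul (by positivity) (by positivity), log_rpow (by positivity), log_rpow (by norm_num),
    log_rpow (by norm_num)]
  have hlog := (le_abs_self _).trans hx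
  rw [Real.norm_eq_abs, id, abs_of_pos hx0] at hlog
  linarith

theorem eventually_mul_pow_mul_four_pow_le (m : ℕ) :
    ∀ᶠ n : ℕ in atTop, n * (2 * n) ^ (Nat.sqrt (2 * n) + m) * 4 ^ (2 * n / 3) ≤ 4 ^ n := by
  filter_upwards [tendsto_natCast_atTop_atTop.eventually (eventually_mul_rpow_mul_four_rpow_le m),
    eventually_ge_atTop 1] with n h hn
  rw [← Nat.cast_le (α := ℝ)]
  push_cast
  simp only [← rpow_natCast]
  refine le_trans ?_ h
  gcongr
  · exact_mod_cast (by omega : 1 ≤ 2 * n)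
  · push_cast
    gcongr
    exact_mod_cast nat_sqrt_le_real_sqrt
  · norm_num
  · exact Nat.cast_div_le.trans (by norm_cast)

end

open Nat Finset
open scoped Nat.Prime

theorem primeCounting_le_self (k : ℕ) : π k ≤ k := by
  rw [← primesLE_card_eq_primeCounting, primesLE_eq_filter_Ioc_zero]
  exact (card_filter_le _ _).trans (by simp)

theorem primeCounting_add_one_le (k : ℕ) : π (k + 1) ≤ π k + 1 := by
  simp only [primeCounting, primeCounting', count_succ]
  split_ifs <;> omega

theorem pow_factorization_centralBinom_le {n p : ℕ} (hn : 2 < n) (hp : p.Prime) :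
    p ^ (centralBinom n).factorization p ≤
      (if p ≤ sqrt (2 * n) then 2 * n else 1) * (if p ≤ 2 * n / 3 then p else 1) *
        (if n < p then 2 * n else 1) := by
  have hbound : p ^ (centralBinom n).factorization p ≤ 2 * n :=
    pow_factorization_choose_le (by omega)
  have hsqrt : sqrt (2 * n) < n := sqrt_lt'.mpr (by nlinarith)
  rcases le_or_gt p (sqrt (2 * n)) with hsmall | hsmall
  · rw [if_pos hsmall, if_neg (show ¬n < p by omega), mul_one]
    exact hbound.trans (Nat.le_mul_of_pos_right _ (by split_ifs <;> simp [hp.pos]))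
  rcases le_or_gt p (2 * n / 3) with hmid | hmid
  · rw [if_neg (by omega), if_pos hmid, if_neg (by omega), one_mul, mul_one]
    exact (pow_le_pow_right₀ hp.one_lt.le
      (factorization_choose_le_one (sqrt_lt'.mp hsmall))).trans_eq (pow_one p)
  rw [if_neg (by omega), if_neg (by omega), one_mul, one_mul]
  rcases le_or_gt p n with hgap | hlarge
  · rw [factorization_centralBinom_of_two_mul_self_lt_three_mul hn hgap (by omega), pow_zero]
    split_ifs <;> omega
  · rwa [if_pos hlarge]

theorem prod_primesLE_pow_factorization_centralBinom (n : ℕ) :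
    ∏ p ∈ primesLE (2 * n), p ^ (centralBinom n).factorization p = centralBinom n := by
  rw [primesLE_eq_filter_range, prod_filter_of_ne, prod_pow_factorization_centralBinom]
  intro p _ hp
  by_contra hnp
  simp [factorization_eq_zero_of_not_prime _ hnp] at hp

theorem centralBinom_le_primeCounting {n : ℕ} (hn : 2 < n) :
    centralBinom n ≤
      (2 * n) ^ π (sqrt (2 * n)) * 4 ^ (2 * n / 3) * (2 * n) ^ (π (2 * n) - π n) := by
  have hsmall : {p ∈ primesLE (2 * n) | p ≤ sqrt (2 * n)} = primesLE (sqrt (2 * n)) := by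
    have := sqrt_le_self (2 * n)
    ext p; simp only [mem_filter, mem_primesLE]; grind
  have hmid : {p ∈ primesLE (2 * n) | p ≤ 2 * n / 3} = primesLE (2 * n / 3) := by
    ext p; simp only [mem_filter, mem_primesLE]; grind
  have hlarge : {p ∈ primesLE (2 * n) | n < p} = primesLE (2 * n) \ primesLE n := by
    ext p; simp only [mem_filter, Finset.mem_sdiff, mem_primesLE]; grind
  calc centralBinom n = ∏ p ∈ primesLE (2 * n), p ^ (centralBinom n).factorization p :=
        (prod_primesLE_pow_factorization_centralBinom n).symm
    _ ≤ ∏ p ∈ primesLE (2 * n), ((if p ≤ sqrt (2 * n) then 2 * n else 1) *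
          (if p ≤ 2 * n / 3 then p else 1) * (if n < p then 2 * n else 1)) :=
        prod_le_prod' fun p hp => pow_factorization_centralBinom_le hn (prime_of_mem_primesLE hp)
    _ = (2 * n) ^ π (sqrt (2 * n)) * primorial (2 * n / 3) * (2 * n) ^ (π (2 * n) - π n) := by
        rw [prod_mul_distrib, prod_mul_distrib, ← prod_filter, ← prod_filter, ← prod_filter,
          hsmall, hmid, hlarge, prod_const, prod_const,
          card_sdiff_of_subset (primesLE_mono (by omega)), primesLE_card_eq_primeCounting,
          primesLE_card_eq_primeCounting, primesLE_card_eq_primeCounting]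
        rfl
    _ ≤ _ := by gcongr; exact primorial_le_four_pow _

theorem eventually_le_primeCounting_two_mul_sub (m : ℕ) :
    ∀ᶠ n in atTop, m ≤ π (2 * n) - π n := by
  filter_upwards [eventually_mul_pow_mul_four_pow_le m, eventually_ge_atTop 4] with n hineq hn
  by_contra! hfew
  have hexp : π (sqrt (2 * n)) + (π (2 * n) - π n) ≤ sqrt (2 * n) + m := by
    have := primeCounting_le_self (sqrt (2 * n))
    omega
  refine lt_irrefl (4 ^ n) ?_
  calc 4 ^ n < n * centralBinom n := four_pow_lt_mul_centralBinom n hn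
    _ ≤ n * ((2 * n) ^ π (sqrt (2 * n)) * 4 ^ (2 * n / 3) * (2 * n) ^ (π (2 * n) - π n)) := by
      gcongr; exact centralBinom_le_primeCounting (by omega)
    _ = n * (2 * n) ^ (π (sqrt (2 * n)) + (π (2 * n) - π n)) * 4 ^ (2 * n / 3) := by ring
    _ ≤ n * (2 * n) ^ (sqrt (2 * n) + m) * 4 ^ (2 * n / 3) := by gcongr; omega
    _ ≤ 4 ^ n := hineq

theorem tendsto_primeCounting_sub_primeCounting_div_two :
    Tendsto (fun x => π x - π (x / 2)) atTop atTop := by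
  refine tendsto_atTop.mpr fun m => ?_
  filter_upwards [(Nat.tendsto_div_const_atTop two_ne_zero).eventually
    (eventually_le_primeCounting_two_mul_sub m)] with x hx
  have := Nat.monotone_primeCounting (Nat.mul_div_le x 2)
  omega

theorem primeCounting_sub_primeCounting_div_two_add_one_le (x : ℕ) :
    π (x + 1) - π ((x + 1) / 2) ≤ π x - π (x / 2) + 1 := by
  have := primeCounting_add_one_le x
  have := Nat.monotone_primeCounting (Nat.div_le_div_right (c := 2) (Nat.le_add_right x 1))
  have := Nat.monotone_primeCounting (Nat.div_le_self x 2)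
  omega

theorem labos_exists_and_le_ramanujan_general (n : ℕ) :
    (∃ L : ℕ, 0 < L ∧ Nat.primeCounting L - Nat.primeCounting (L / 2) = n ∧
      ∀ L' : ℕ, 0 < L' → Nat.primeCounting L' - Nat.primeCounting (L' / 2) = n →
        L ≤ L') ∧
    labos n ≤ ramanujan n := by
  have hram_ne : {R | 0 < R ∧ ∀ x, R ≤ x → n ≤ π x - π (x / 2)}.Nonempty := by
    obtain ⟨N, hN⟩ := eventually_atTop.mp
      (tendsto_atTop.mp tendsto_primeCounting_sub_primeCounting_div_two n)
    exact ⟨N + 1, N.succ_pos, fun x hx => hN x (by omega)⟩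
  have hram : π (ramanujan n) - π (ramanujan n / 2) = n :=
    apply_sInf_eq_of_le_add_one primeCounting_sub_primeCounting_div_two_add_one_le
      (by simp) hram_ne
  have hram_mem : ramanujan n ∈ {L | 0 < L ∧ π L - π (L / 2) = n} :=
    ⟨(Nat.sInf_mem hram_ne).1, hram⟩
  obtain ⟨hpos, hlabos⟩ : 0 < labos n ∧ π (labos n) - π (labos n / 2) = n :=
    Nat.sInf_mem ⟨_, hram_mem⟩
  exact ⟨⟨labos n, hpos, hlabos, fun L hL hLn => Nat.sInf_le ⟨hL, hLn⟩⟩,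
    Nat.sInf_le hram_mem⟩

/-- For every n ≥ 1, the n-th Labos number exists (there is a smallest positive
integer L with π(L) − π(⌊L/2⌋) = n), and L_n ≤ R_n. -/
theorem labos_exists_and_le_ramanujan (n : ℕ) (hn : 1 ≤ n) :
    (∃ L : ℕ, 0 < L ∧ Nat.primeCounting L - Nat.primeCounting (L / 2) = n ∧
      ∀ L' : ℕ, 0 < L' → Nat.primeCounting L' - Nat.primeCounting (L' / 2) = n →
        L ≤ L') ∧
    labos n ≤ ramanujan n :=
  labos_exists_and_le_ramanujan_general n
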